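/- Shifting Lemma: Let F be a forest of an X-tree, let e and f be edges of F, and let E be a set of edges of F with f ∈ E and e ∉ E. Let v_f be the endpoint of f closest to e and v_e an endpoint of e. If v_f is connected to v_e in F − E, and no labelled node x of F is connected to v_f in F − (E ∪ {e}), then F ÷ E = F ÷ ((E ∖ {f}) ∪ {e}). -/

import Mathlib

namespace Phylo

/-- Rooted binary phylogenetic tree with leaves labelled by `X`. -/
inductive PT (X : Type) where
  | leaf : X → PT X
  | node : PT X → PT X → PT X
deriving DecidableEq

variable {X : Type} [DecidableEq X]

/-- The multiset of leaf labels of a tree. -/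
def labels : PT X → Multiset X
  | .leaf x => {x}
  | .node l r => labels l + labels r

/-- The finite set of leaf labels of a tree. -/
def labs : PT X → Finset X
  | .leaf x => {x}
  | .node l r => labs l ∪ labs r

/-- The multiset of leaf labels of a forest. -/
def labelsF (F : Multiset (PT X)) : Multiset X := (F.map labels).sum

/-- `Sub u t`: `u` occurs as a rooted subtree (i.e. a node) of `t`. -/
inductive Sub : PT X → PT X → Prop
  | refl (t : PT X) : Sub t t
  | left {u l r : PT X} : Sub u l → Sub u (PT.node l r)
  | right {u l r : PT X} : Sub u r → Sub u (PT.node l r)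

/-- Boolean version of `Sub`. -/
def subB : PT X → PT X → Bool
  | u, .leaf x => decide (u = .leaf x)
  | u, .node l r => decide (u = .node l r) || subB u l || subB u r

/-- The finite set of all rooted subtrees (nodes) of a tree. -/
def subtrees : PT X → Finset (PT X)
  | .leaf x => {.leaf x}
  | .node l r => insert (.node l r) (subtrees l ∪ subtrees r)

/-- A node of a forest, identified with the subtree below it. -/
def NodeOf (F : Multiset (PT X)) (u : PT X) : Prop := ∃ C ∈ F, Sub u C

/-- Cut the edges above the subtrees in `E`, suppressing unlabelled nodes with
fewer than two children.  Returns the component containing the root (if any)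
together with the multiset of detached components. -/
def cutAll (E : Finset (PT X)) : PT X → Option (PT X) × Multiset (PT X)
  | .leaf x => (some (.leaf x), 0)
  | .node l r =>
    let pl := cutAll E l
    let pr := cutAll E r
    let lk : Option (PT X) := if l ∈ E then none else pl.1
    let lM : Multiset (PT X) :=
      if l ∈ E then pl.2 + (↑pl.1.toList : Multiset (PT X)) else pl.2
    let rk : Option (PT X) := if r ∈ E then none else pr.1
    let rM : Multiset (PT X) :=
      if r ∈ E then pr.2 + (↑pr.1.toList : Multiset (PT X)) else pr.2
    (match lk, rk with
      | some a, some b => some (.node a b)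
      | some a, none => some a
      | none, some b => some b
      | none, none => none,
     lM + rM)

/-- `F ÷ E`: the forest yielded by deleting the edges in `E` from the forest
`F` (an edge is identified by the subtree hanging below it) and suppressing
unlabelled nodes with fewer than two children. -/
def divF (F : Multiset (PT X)) (E : Finset (PT X)) : Multiset (PT X) :=
  (F.map (fun t => (↑(cutAll E t).1.toList : Multiset (PT X)) + (cutAll E t).2)).sum

/-- `F` is a forest of the forest `G`. -/
def ForestOf (F G : Multiset (PT X)) : Prop := ∃ E : Finset (PT X), divF G E = F

/-- `F` is an agreement forest of the trees `T₁` and `T₂`. -/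
def IsAF (F : Multiset (PT X)) (T₁ T₂ : PT X) : Prop :=
  ForestOf F {T₁} ∧ ForestOf F {T₂}

/-- The minimum number of edges that must be cut in `F` to obtain an
agreement forest of `T₁` and `T₂`. -/
noncomputable def ecut (T₁ T₂ : PT X) (F : Multiset (PT X)) : ℕ :=
  sInf {n | ∃ E : Finset (PT X), E.card = n ∧ IsAF (divF F E) T₁ T₂}

/-- The number of components of a maximum agreement forest. -/
noncomputable def maf (T₁ T₂ : PT X) : ℕ :=
  sInf {n | ∃ F : Multiset (PT X), IsAF F T₁ T₂ ∧ Multiset.card F = n}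

/-- `u` is the smallest subtree of `t` containing all labels in `S`
(the LCA of `S` in `t`). -/
def IsLCA (t : PT X) (S : Finset X) (u : PT X) : Prop :=
  Sub u t ∧ S ⊆ labs u ∧ ∀ v, Sub v u → S ⊆ labs v → v = u

/-- In `t`, the LCA of `S₁` is an ancestor of the LCA of `S₂`. -/
def Anc (t : PT X) (S₁ S₂ : Finset X) : Prop :=
  ∃ u v, IsLCA t S₁ u ∧ IsLCA t S₂ v ∧ Sub v u

/-- In `t`, the LCA of `S₁` is a proper ancestor of the LCA of `S₂`. -/
def PAnc (t : PT X) (S₁ S₂ : Finset X) : Prop :=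
  ∃ u v, IsLCA t S₁ u ∧ IsLCA t S₂ v ∧ Sub v u ∧ v ≠ u

/-- Edge of the cycle graph of an agreement forest of `T₁` and `T₂`:
the root of component `C` maps to an ancestor of the root of `C'`
in `T₁` or in `T₂`. -/
def CEdge (T₁ T₂ : PT X) (C C' : PT X) : Prop :=
  C ≠ C' ∧ (Anc T₁ (labs C) (labs C') ∨ Anc T₂ (labs C) (labs C'))

/-- The cycle graph of `F` (w.r.t. `T₁`, `T₂`) contains a directed cycle. -/
def HasCycle (T₁ T₂ : PT X) (F : Multiset (PT X)) : Prop :=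
  ∃ (C : PT X) (l : List (PT X)), C ∈ F ∧ (∀ D ∈ l, D ∈ F) ∧
    List.Chain (CEdge T₁ T₂) C (l ++ [C])

/-- `F` is an acyclic agreement forest of `T₁` and `T₂`. -/
def IsAAF (F : Multiset (PT X)) (T₁ T₂ : PT X) : Prop :=
  IsAF F T₁ T₂ ∧ ¬ HasCycle T₁ T₂ F

/-- The minimum number of edges that must be cut in `F` to obtain an
acyclic agreement forest of `T₁` and `T₂`. -/
noncomputable def aecut (T₁ T₂ : PT X) (F : Multiset (PT X)) : ℕ :=
  sInf {n | ∃ E : Finset (PT X), E.card = n ∧ IsAAF (divF F E) T₁ T₂}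

/-- The number of components of a maximum acyclic agreement forest. -/
noncomputable def maaf (T₁ T₂ : PT X) : ℕ :=
  sInf {n | ∃ F : Multiset (PT X), IsAAF F T₁ T₂ ∧ Multiset.card F = n}

/-- `a` and `c` are siblings in some component of `F`. -/
def SiblingIn (F : Multiset (PT X)) (a c : PT X) : Prop :=
  ∃ C ∈ F, Sub (PT.node a c) C ∨ Sub (PT.node c a) C

/-- `(a,c)` is a sibling pair of `F₁`: `a` and `c` have a common parent in
`F₁` and both exist in `F₂`. -/
def SiblingPair (F₁ F₂ : Multiset (PT X)) (a c : PT X) : Prop :=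
  SiblingIn F₁ a c ∧ (∃ C ∈ F₂, Sub a C) ∧ (∃ C ∈ F₂, Sub c C)

/-- The nodes `a` and `c` lie in the same component of `F`. -/
def SameComp (F : Multiset (PT X)) (a c : PT X) : Prop :=
  ∃ C ∈ F, Sub a C ∧ Sub c C

/-- The leaves labelled `a` and `b` lie in the same component of `F`. -/
def SameCompLabel (F : Multiset (PT X)) (a b : X) : Prop :=
  ∃ C ∈ F, a ∈ labs C ∧ b ∈ labs C

/-- `ab|c` is a triple of the forest `F`. -/
def IsTriple (F : Multiset (PT X)) (a b c : X) : Prop :=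
  ∃ C ∈ F, ∃ u, Sub u C ∧ a ∈ labs u ∧ b ∈ labs u ∧ c ∈ labs C ∧ c ∉ labs u

/-- `UpChain x m bs`: walking up from node `x` to node `m`, the siblings
encountered (the pendant nodes of the path) are `bs`, in order. -/
inductive UpChain : PT X → PT X → List (PT X) → Prop
  | nil (x : PT X) : UpChain x x []
  | consL {x m b : PT X} {bs : List (PT X)} :
      UpChain (PT.node x b) m bs → UpChain x m (b :: bs)
  | consR {x m b : PT X} {bs : List (PT X)} :
      UpChain (PT.node b x) m bs → UpChain x m (b :: bs)

/-- `CutEdge T R s`: cutting one edge of `T` (and suppressing the resulting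
degree-two node) leaves the tree `R` and detaches the subtree `s`. -/
inductive CutEdge : PT X → PT X → PT X → Prop
  | cutL (l r : PT X) : CutEdge (.node l r) r l
  | cutR (l r : PT X) : CutEdge (.node l r) l r
  | inL {l l' s : PT X} (r : PT X) : CutEdge l l' s → CutEdge (.node l r) (.node l' r) s
  | inR {r r' s : PT X} (l : PT X) : CutEdge r r' s → CutEdge (.node l r) (.node l r') s

/-- `Graft s R T'`: `T'` is obtained from `R` by subdividing an edge of `R`
(or adding a new root) and attaching `s` below the new node. -/
inductive Graft (s : PT X) : PT X → PT X → Prop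
  | here (t : PT X) : Graft s t (.node s t)
  | here' (t : PT X) : Graft s t (.node t s)
  | inL {l l' : PT X} (r : PT X) : Graft s l l' → Graft s (.node l r) (.node l' r)
  | inR {r r' : PT X} (l : PT X) : Graft s r r' → Graft s (.node l r) (.node l r')

/-- A single subtree prune-and-regraft operation. -/
def SprStep (T T' : PT X) : Prop := ∃ R s, CutEdge T R s ∧ Graft s R T'

/-- `n` SPR operations transform the first tree into the second. -/
def SprN : ℕ → PT X → PT X → Prop
  | 0 => fun T T' => T = T'
  | n + 1 => fun T T'' => ∃ T', SprStep T T' ∧ SprN n T' T''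

/-- The SPR distance. -/
noncomputable def dspr (T₁ T₂ : PT X) : ℕ := sInf {n | SprN n T₁ T₂}

/-- The edges on the path from node `v` to the root of the component `C`
(each edge identified by the subtree below it). -/
def pathEdges (C v : PT X) : Finset (PT X) :=
  (subtrees C).filter (fun s => subB v s ∧ s ≠ C)

/-- `HybEdge T ρ F u C`: the expanded cycle graph of `F` has a `T`-hybrid edge
from the node `u` of `F` to the root of the component `C ≠ C_ρ` of `F`;
`u` is the lowest node of `F` whose image in `T` is a proper ancestor of the
image of the root of `C`. -/
def HybEdge (T : PT X) (ρ : X) (F : Multiset (PT X)) (u C : PT X) : Prop :=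
  C ∈ F ∧ ρ ∉ labs C ∧ NodeOf F u ∧ PAnc T (labs u) (labs C) ∧
    ∀ u', NodeOf F u' → PAnc T (labs u') (labs C) → Anc T (labs u') (labs u)

/-- Edge of the expanded cycle graph `ecyc(F)`: either a tree edge of `F`
(directed away from the root) or a hybrid edge. -/
def EcycEdge (T₁ T₂ : PT X) (ρ : X) (F : Multiset (PT X)) (u v : PT X) : Prop :=
  (NodeOf F u ∧ ∃ l r, u = PT.node l r ∧ (v = l ∨ v = r))
  ∨ HybEdge T₁ ρ F u v ∨ HybEdge T₂ ρ F u v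

/-- The expanded cycle graph of `F` contains a directed cycle. -/
def HasCycleE (T₁ T₂ : PT X) (ρ : X) (F : Multiset (PT X)) : Prop :=
  ∃ (u : PT X) (l : List (PT X)), NodeOf F u ∧ (∀ w ∈ l, NodeOf F w) ∧
    List.Chain (EcycEdge T₁ T₂ ρ F) u (l ++ [u])

/-- The set of potential exit nodes of `F`: tails of hybrid edges of
`ecyc(F)`. -/
def pen (T₁ T₂ : PT X) (ρ : X) (F : Multiset (PT X)) : Set (PT X) :=
  {u | ∃ C, HybEdge T₁ ρ F u C ∨ HybEdge T₂ ρ F u C}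

/-- The edge above `s` lies on the path from node `a` up to node `m`. -/
def OnPathUp (a m s : PT X) : Prop := Sub a s ∧ Sub s m ∧ s ≠ m

/-- `a` and `b` are connected in `F − E` (deleting the edges in `E`,
without suppression). -/
def ConnAvoiding (F : Multiset (PT X)) (E : Finset (PT X)) (a b : PT X) : Prop :=
  ∃ C ∈ F, ∃ m, Sub m C ∧ Sub a m ∧ Sub b m ∧
    ∀ s ∈ E, ¬ OnPathUp a m s ∧ ¬ OnPathUp b m s

/-- `v` is an endpoint of the edge above `s` in `F`. -/
def IsEndpoint (F : Multiset (PT X)) (s v : PT X) : Prop :=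
  v = s ∨ (NodeOf F v ∧ ∃ w, v = PT.node s w ∨ v = PT.node w s)

/-- Components `C` and `C'` (of some forest) overlap in the forest `F₁`. -/
def Overlap (F₁ : Multiset (PT X)) (C C' : PT X) : Prop :=
  ∃ a b c d : X, a ∈ labs C ∧ b ∈ labs C ∧ c ∈ labs C' ∧ d ∈ labs C' ∧
    ∃ D ∈ F₁, a ∈ labs D ∧ b ∈ labs D ∧ c ∈ labs D ∧ d ∈ labs D ∧
      ∃ s, Sub s D ∧ s ≠ D ∧
        Xor' (a ∈ labs s) (b ∈ labs s) ∧ Xor' (c ∈ labs s) (d ∈ labs s)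

end Phylo

/-!
Let `K` be the component of `v_f` in `F − (E ∪ {e})`: it has no labelled node, and both `e` and
`f` have an endpoint in `K`. Cutting an edge with a label-free component at one of its endpoints
does not change the forest yielded. If that component lies below the edge, it is suppressed
anyway; if it lies above, it is suppressed as well, and the component hanging from the edge only
moves from its parent component to the detached ones. Hence
`F ÷ E = F ÷ (E ∪ {e}) = F ÷ ((E ∖ {f}) ∪ {e})`, the second step uncutting `f`, because
`(E ∖ {f}) ∪ {e} ∪ {f} = E ∪ {e}`.
-/

namespace Phylo

variable {X : Type}

section Tree

theorem Sub.trans {a b c : PT X} (hab : Sub a b) (hbc : Sub b c) : Sub a c := by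
  induction hbc with
  | refl => exact hab
  | left _ ih => exact .left ih
  | right _ ih => exact .right ih

theorem Sub.sizeOf_le {u t : PT X} (h : Sub u t) : sizeOf u ≤ sizeOf t := by
  induction h with
  | refl => exact le_rfl
  | left _ ih => simp only [PT.node.sizeOf_spec]; omega
  | right _ ih => simp only [PT.node.sizeOf_spec]; omega

theorem Sub.antisymm {u t : PT X} (h : Sub u t) (h' : Sub t u) : u = t := by
  cases h with
  | refl => rfl
  | left h =>
    have := h.sizeOf_le; have := h'.sizeOf_le
    simp only [PT.node.sizeOf_spec] at *; omega
  | right h =>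
    have := h.sizeOf_le; have := h'.sizeOf_le
    simp only [PT.node.sizeOf_spec] at *; omega

theorem sub_node_iff {u l r : PT X} : Sub u (.node l r) ↔ u = .node l r ∨ Sub u l ∨ Sub u r := by
  refine ⟨fun h => ?_, ?_⟩
  · cases h with
    | refl => exact .inl rfl
    | left h => exact .inr (.inl h)
    | right h => exact .inr (.inr h)
  · rintro (rfl | h | h)
    exacts [.refl _, .left h, .right h]

def IsChild (c t : PT X) : Prop := ∃ w, t = PT.node c w ∨ t = PT.node w c

theorem IsChild.sub {c t : PT X} (h : IsChild c t) : Sub c t := by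
  obtain ⟨w, rfl | rfl⟩ := h
  exacts [.left (.refl c), .right (.refl c)]

theorem IsChild.not_sub {c t : PT X} (h : IsChild c t) : ¬ Sub t c := by
  intro h'
  obtain ⟨w, rfl | rfl⟩ := h <;>
  · have := h'.sizeOf_le
    simp only [PT.node.sizeOf_spec] at this; omega

theorem Sub.exists_isChild {u t : PT X} (h : Sub u t) (hne : u ≠ t) :
    ∃ p, IsChild u p ∧ Sub p t := by
  induction h with
  | refl => exact absurd rfl hne
  | @left l r _ ih =>
    by_cases hul : u = l
    · exact ⟨.node l r, ⟨r, .inl (hul ▸ rfl)⟩, .refl _⟩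
    · obtain ⟨p, hp, hpl⟩ := ih hul
      exact ⟨p, hp, .left hpl⟩
  | @right l r _ ih =>
    by_cases hur : u = r
    · exact ⟨.node l r, ⟨l, .inr (hur ▸ rfl)⟩, .refl _⟩
    · obtain ⟨p, hp, hpr⟩ := ih hur
      exact ⟨p, hp, .right hpr⟩

end Tree

section Labels

theorem exists_mem_labels (t : PT X) : ∃ x, x ∈ labels t := by
  induction t with
  | leaf x => exact ⟨x, Multiset.mem_singleton_self x⟩
  | node l r ihl _ =>
    obtain ⟨x, hx⟩ := ihl
    exact ⟨x, Multiset.mem_add.mpr (.inl hx)⟩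

theorem Sub.labels_le {u t : PT X} (h : Sub u t) : labels u ≤ labels t := by
  induction h with
  | refl => exact le_rfl
  | left _ ih => exact ih.trans (Multiset.le_add_right _ _)
  | right _ ih => exact ih.trans (Multiset.le_add_left _ _)

theorem Sub.nodup {u t : PT X} (h : Sub u t) (hnd : (labels t).Nodup) : (labels u).Nodup :=
  Multiset.nodup_of_le h.labels_le hnd

theorem not_sub_of_sibling {c b t w : PT X} (ht : t = .node c b ∨ t = .node b c)
    (hnd : (labels t).Nodup) (hc : Sub w c) (hb : Sub w b) : False := by
  obtain ⟨x, hx⟩ := exists_mem_labels w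
  have hxc := Multiset.mem_of_le hc.labels_le hx
  have hxb := Multiset.mem_of_le hb.labels_le hx
  rcases ht with rfl | rfl <;> simp only [labels, Multiset.nodup_add] at hnd
  exacts [Multiset.disjoint_left.mp hnd.2.2 hxc hxb, Multiset.disjoint_left.mp hnd.2.2 hxb hxc]

theorem Sub.total {u v w t : PT X} (hnd : (labels t).Nodup) (hu : Sub u t) (hv : Sub v t)
    (hwu : Sub w u) (hwv : Sub w v) : Sub u v ∨ Sub v u := by
  induction t with
  | leaf y =>
    cases hu; exact .inr hv
  | node l r ihl ihr =>
    have hl := (Sub.left (r := r) (.refl l)).nodup hnd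
    have hr := (Sub.right (l := l) (.refl r)).nodup hnd
    rcases sub_node_iff.mp hu with rfl | hu | hu
    · exact .inr hv
    all_goals rcases sub_node_iff.mp hv with rfl | hv | hv
    · exact .inl (.left hu)
    · exact ihl hl hu hv
    · exact (not_sub_of_sibling (.inl rfl) hnd (hwu.trans hu) (hwv.trans hv)).elim
    · exact .inl (.right hu)
    · exact (not_sub_of_sibling (.inl rfl) hnd (hwv.trans hv) (hwu.trans hu)).elim
    · exact ihr hr hu hv

theorem IsChild.eq_of_sub {c t : PT X} (hct : IsChild c t) (hnd : (labels t).Nodup)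
    {s : PT X} (hcs : Sub c s) (hst : Sub s t) : s = c ∨ s = t := by
  obtain ⟨w, ht | ht⟩ := hct <;> subst ht <;> rcases sub_node_iff.mp hst with h | h | h
  all_goals first
    | exact .inr h
    | exact .inl (h.antisymm hcs)
    | exact (not_sub_of_sibling (.inl rfl) hnd (.refl c) (hcs.trans h)).elim
    | exact (not_sub_of_sibling (.inl rfl) hnd (hcs.trans h) (.refl c)).elim

theorem IsChild.eq_parent {c p p' C : PT X} (hnd : (labels C).Nodup) (hp : IsChild c p)
    (hp' : IsChild c p') (hpC : Sub p C) (hp'C : Sub p' C) : p = p' := by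
  rcases Sub.total hnd hpC hp'C hp.sub hp'.sub with h | h
  · exact (hp'.eq_of_sub (hp'C.nodup hnd) hp.sub h).resolve_left
      (fun h' => hp.not_sub (h' ▸ .refl _))
  · exact ((hp.eq_of_sub (hpC.nodup hnd) hp'.sub h).resolve_left
      (fun h' => hp'.not_sub (h' ▸ .refl _))).symm

end Labels

section Forest

theorem labels_le_labelsF {F : Multiset (PT X)} {C : PT X} (hC : C ∈ F) :
    labels C ≤ labelsF F := by
  obtain ⟨F', rfl⟩ := Multiset.exists_cons_of_mem hC
  simp only [labelsF, Multiset.map_cons, Multiset.sum_cons]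
  exact Multiset.le_add_right _ _

theorem nodup_labels_of_mem {F : Multiset (PT X)} {C : PT X} (hF : (labelsF F).Nodup)
    (hC : C ∈ F) : (labels C).Nodup :=
  Multiset.nodup_of_le (labels_le_labelsF hC) hF

theorem eq_of_sub_of_sub {F : Multiset (PT X)} {C D w : PT X} (hF : (labelsF F).Nodup)
    (hC : C ∈ F) (hD : D ∈ F) (hwC : Sub w C) (hwD : Sub w D) : C = D := by
  by_contra hne
  obtain ⟨F', rfl⟩ := Multiset.exists_cons_of_mem hC
  have hDF' : D ∈ F' := (Multiset.mem_cons.mp hD).resolve_left (Ne.symm hne)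
  obtain ⟨x, hx⟩ := exists_mem_labels w
  simp only [labelsF, Multiset.map_cons, Multiset.sum_cons, Multiset.nodup_add] at hF
  exact Multiset.disjoint_left.mp hF.2.2 (Multiset.mem_of_le hwC.labels_le hx)
    (Multiset.mem_of_le ((hwD.labels_le).trans (labels_le_labelsF hDF')) hx)

theorem labelsF_add (A B : Multiset (PT X)) : labelsF (A + B) = labelsF A + labelsF B := by
  simp [labelsF]

end Forest

section Cut

variable [DecidableEq X]

/-- `attached G c` and `detached G c` are the two parts that `cutAll G` hands from the child `c`
to its parent (`lk`/`rk` and `lM`/`rM` in its definition). -/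
def attached (G : Finset (PT X)) (c : PT X) : Option (PT X) :=
  if c ∈ G then none else (cutAll G c).1

def detached (G : Finset (PT X)) (c : PT X) : Multiset (PT X) :=
  if c ∈ G then (cutAll G c).2 + ((cutAll G c).1.toList : Multiset (PT X)) else (cutAll G c).2

def cutForest (G : Finset (PT X)) (t : PT X) : Multiset (PT X) :=
  ((cutAll G t).1.toList : Multiset (PT X)) + (cutAll G t).2

theorem divF_eq_sum_map_cutForest (F : Multiset (PT X)) (G : Finset (PT X)) :
    divF F G = (F.map (cutForest G)).sum := rfl

theorem cutAll_node (G : Finset (PT X)) (l r : PT X) :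
    cutAll G (.node l r) =
      ((attached G l).merge .node (attached G r), detached G l + detached G r) := by
  unfold attached detached
  by_cases hl : l ∈ G <;> by_cases hr : r ∈ G <;>
    cases hcl : (cutAll G l).1 <;> cases hcr : (cutAll G r).1 <;>
    simp [cutAll, hl, hr, hcl, hcr, Option.merge]

theorem cutAll_of_attached_eq_none {G : Finset (PT X)} {t c b : PT X}
    (ht : t = .node c b ∨ t = .node b c) (hb : attached G b = none) :
    cutAll G t = (attached G c, detached G c + detached G b) := by
  rcases ht with rfl | rfl <;> simp [cutAll_node, hb, add_comm]

theorem cutAll_eq_of_children {G G' : Finset (PT X)} {t c b : PT X}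
    (ht : t = .node c b ∨ t = .node b c)
    (hc : attached G c = attached G' c ∧ detached G c = detached G' c)
    (hb : attached G b = attached G' b ∧ detached G b = detached G' b) :
    cutAll G t = cutAll G' t := by
  rcases ht with rfl | rfl <;> rw [cutAll_node, cutAll_node, hc.1, hc.2, hb.1, hb.2]

theorem attached_congr {G G' : Finset (PT X)} {c : PT X} (h : cutAll G c = cutAll G' c)
    (hm : c ∈ G ↔ c ∈ G') : attached G c = attached G' c ∧ detached G c = detached G' c := by
  simp only [attached, detached, h, hm, and_self]

theorem cutAll_congr {G G' : Finset (PT X)} (t : PT X)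
    (h : ∀ s, Sub s t → s ≠ t → (s ∈ G ↔ s ∈ G')) : cutAll G t = cutAll G' t := by
  induction t with
  | leaf x => rfl
  | node l r ihl ihr =>
    have child : ∀ c, IsChild c (.node l r) →
        ((∀ s, Sub s c → s ≠ c → (s ∈ G ↔ s ∈ G')) → cutAll G c = cutAll G' c) →
        attached G c = attached G' c ∧ detached G c = detached G' c := fun c hc ih =>
      attached_congr (ih fun s hs _ => h s (hs.trans hc.sub) fun hst => hc.not_sub (hst ▸ hs))
        (h c hc.sub fun hct => hc.not_sub (hct ▸ .refl c))
    exact cutAll_eq_of_children (.inl rfl) (child l ⟨r, .inl rfl⟩ ihl) (child r ⟨l, .inr rfl⟩ ihr)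

theorem cutAll_insert_of_forall_ne {G : Finset (PT X)} {g t : PT X}
    (h : ∀ s, Sub s t → s ≠ t → s ≠ g) : cutAll (insert g G) t = cutAll G t :=
  cutAll_congr t fun s hs hne => by simp [h s hs hne]

theorem cutAll_insert_self (G : Finset (PT X)) (g : PT X) :
    cutAll (insert g G) g = cutAll G g :=
  cutAll_insert_of_forall_ne fun _ _ h => h

theorem cutAll_insert_of_not_sub {G : Finset (PT X)} {g t : PT X} (h : ¬ Sub g t) :
    cutAll (insert g G) t = cutAll G t :=
  cutAll_insert_of_forall_ne fun _ hs _ hsg => h (hsg ▸ hs)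

theorem attached_insert_of_not_sub {G : Finset (PT X)} {g c : PT X} (h : ¬ Sub g c) :
    attached (insert g G) c = attached G c ∧ detached (insert g G) c = detached G c :=
  attached_congr (cutAll_insert_of_not_sub h)
    (by simp [show c ≠ g from fun hcg => h (hcg ▸ .refl c)])

theorem labelsF_cutForest (G : Finset (PT X)) (t : PT X) :
    labelsF (cutForest G t) = labels t := by
  induction t with
  | leaf x => simp [cutForest, cutAll, labelsF, labels]
  | node l r ihl ihr =>
    have child : ∀ c, labelsF ((attached G c).toList : Multiset (PT X)) +
        labelsF (detached G c) = labelsF (cutForest G c) := by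
      intro c
      unfold attached detached cutForest
      split_ifs <;> simp [labelsF, add_comm]
    have merge : ∀ a b : Option (PT X), labelsF ((a.merge .node b).toList : Multiset (PT X)) =
        labelsF (a.toList : Multiset (PT X)) + labelsF (b.toList : Multiset (PT X)) := by
      rintro (_ | a) (_ | b) <;> simp [Option.merge, labelsF, labels]
    rw [cutForest, cutAll_node, labelsF_add, labelsF_add, merge, labels, ← ihl, ← ihr,
      ← child l, ← child r]
    abel

theorem labelsF_divF (F : Multiset (PT X)) (G : Finset (PT X)) :
    labelsF (divF F G) = labelsF F := by
  rw [divF_eq_sum_map_cutForest]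
  induction F using Multiset.induction_on with
  | empty => rfl
  | cons C F ih =>
    simp only [Multiset.map_cons, Multiset.sum_cons, labelsF_add, ih, labelsF_cutForest]
    simp [labelsF]

theorem divF_congr {F : Multiset (PT X)} {G G' : Finset (PT X)}
    (h : ∀ C ∈ F, cutForest G C = cutForest G' C) : divF F G = divF F G' := by
  rw [divF_eq_sum_map_cutForest, divF_eq_sum_map_cutForest, Multiset.map_congr rfl h]

end Cut

section Connectivity

variable {F : Multiset (PT X)} {G : Finset (PT X)}

theorem ConnAvoiding.symm {a b : PT X} (h : ConnAvoiding F G a b) : ConnAvoiding F G b a := by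
  obtain ⟨C, hC, m, hmC, ham, hbm, hG⟩ := h
  exact ⟨C, hC, m, hmC, hbm, ham, fun s hs => (hG s hs).symm⟩

theorem not_onPathUp_self {a s : PT X} : ¬ OnPathUp a a s :=
  fun h => h.2.2 (h.2.1.antisymm h.1)

theorem connAvoiding_self {C a : PT X} (hC : C ∈ F) (haC : Sub a C) : ConnAvoiding F G a a :=
  ⟨C, hC, a, haC, .refl a, .refl a, fun _ _ => ⟨not_onPathUp_self, not_onPathUp_self⟩⟩

/-- A path from `a` up to `m₂` passing through `m₁` is covered by the path from `a` to `m₁`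
and the path from any `b` below `m₁` up to `m₂`. -/
theorem not_onPathUp_of_sub {C a b m₁ m₂ s : PT X} (hnd : (labels C).Nodup) (hm₂C : Sub m₂ C)
    (ham₁ : Sub a m₁) (hbm₁ : Sub b m₁) (hm₁₂ : Sub m₁ m₂) (ha : ¬ OnPathUp a m₁ s)
    (hb : ¬ OnPathUp b m₂ s) : ¬ OnPathUp a m₂ s := by
  rintro ⟨has, hsm₂, hne⟩
  rcases Sub.total hnd (hsm₂.trans hm₂C) (hm₁₂.trans hm₂C) has ham₁ with hsm₁ | hm₁s
  · by_cases hs : s = m₁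
    · exact hb ⟨hs ▸ hbm₁, hsm₂, hne⟩
    · exact ha ⟨has, hsm₁, hs⟩
  · exact hb ⟨hbm₁.trans hm₁s, hsm₂, hne⟩

theorem ConnAvoiding.trans (hF : (labelsF F).Nodup) {a b c : PT X}
    (hab : ConnAvoiding F G a b) (hbc : ConnAvoiding F G b c) : ConnAvoiding F G a c := by
  obtain ⟨C, hC, m₁, hm₁C, ham₁, hbm₁, h₁⟩ := hab
  obtain ⟨D, hD, m₂, hm₂D, hbm₂, hcm₂, h₂⟩ := hbc
  obtain rfl : C = D := eq_of_sub_of_sub hF hC hD (hbm₁.trans hm₁C) (hbm₂.trans hm₂D)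
  have hnd := nodup_labels_of_mem hF hC
  rcases Sub.total hnd hm₁C hm₂D hbm₁ hbm₂ with h₁₂ | h₂₁
  · exact ⟨C, hC, m₂, hm₂D, ham₁.trans h₁₂, hcm₂, fun s hs =>
      ⟨not_onPathUp_of_sub hnd hm₂D ham₁ hbm₁ h₁₂ (h₁ s hs).1 (h₂ s hs).1, (h₂ s hs).2⟩⟩
  · exact ⟨C, hC, m₁, hm₁C, ham₁, hcm₂.trans h₂₁, fun s hs =>
      ⟨(h₁ s hs).1, not_onPathUp_of_sub hnd hm₁C hcm₂ hbm₂ h₂₁ (h₂ s hs).2 (h₁ s hs).2⟩⟩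

theorem connAvoiding_of_isChild (hF : (labelsF F).Nodup) {C c t : PT X} (hC : C ∈ F)
    (htC : Sub t C) (hct : IsChild c t) (hcG : c ∉ G) : ConnAvoiding F G c t := by
  refine ⟨C, hC, t, htC, hct.sub, .refl t, fun s hs => ⟨?_, not_onPathUp_self⟩⟩
  rintro ⟨hcs, hst, hne⟩
  rcases hct.eq_of_sub (htC.nodup (nodup_labels_of_mem hF hC)) hcs hst with rfl | rfl
  exacts [hcG hs, hne rfl]

variable [DecidableEq X]

theorem exists_leaf_connAvoiding (hF : (labelsF F).Nodup) {C t : PT X} (hC : C ∈ F)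
    (htC : Sub t C) (hk : (cutAll G t).1 ≠ none) : ∃ x, ConnAvoiding F G (.leaf x) t := by
  induction t with
  | leaf y => exact ⟨y, connAvoiding_self hC htC⟩
  | node l r ihl ihr =>
    have child : ∀ c, IsChild c (.node l r) → (Sub c C → (cutAll G c).1 ≠ none →
        ∃ x, ConnAvoiding F G (.leaf x) c) → attached G c ≠ none →
        ∃ x, ConnAvoiding F G (.leaf x) (.node l r) := by
      intro c hc ih hac
      unfold attached at hac
      split_ifs at hac with hcG
      · exact absurd rfl hac
      obtain ⟨x, hx⟩ := ih (hc.sub.trans htC) hac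
      exact ⟨x, hx.trans hF (connAvoiding_of_isChild hF hC htC hc hcG)⟩
    rw [cutAll_node, Ne, Option.merge_eq_none_iff, not_and_or] at hk
    rcases hk with hl | hr
    exacts [child l ⟨r, .inl rfl⟩ ihl hl, child r ⟨l, .inr rfl⟩ ihr hr]

/-- Anything of `b` surviving in `F ÷ G` would contain a leaf connected to `v` in `F − G`. -/
theorem attached_eq_none_of_noLabel (hF : (labelsF F).Nodup) {C t b v : PT X}
    (hno : ∀ x, ¬ ConnAvoiding F G (.leaf x) v) (hC : C ∈ F) (htC : Sub t C)
    (hbt : IsChild b t) (htv : ConnAvoiding F G t v) : attached G b = none := by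
  unfold attached
  split_ifs with hbG
  · rfl
  by_contra hk
  obtain ⟨x, hx⟩ := exists_leaf_connAvoiding hF hC (hbt.sub.trans htC) hk
  exact hno x ((hx.trans hF (connAvoiding_of_isChild hF hC htC hbt hbG)).trans hF htv)

theorem exists_isEndpoint_connAvoiding_insert {E : Finset (PT X)} {a b e : PT X}
    (hab : ConnAvoiding F E a b) (hb : IsEndpoint F e b) :
    ∃ v, IsEndpoint F e v ∧ ConnAvoiding F (insert e E) a v := by
  obtain ⟨C, hC, m, hmC, ham, hbm, hE⟩ := hab
  by_cases hae : OnPathUp a m e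
  · refine ⟨e, .inl rfl, C, hC, e, hae.2.1.trans hmC, hae.1, .refl e, fun s hs =>
      ⟨?_, not_onPathUp_self⟩⟩
    rintro ⟨has, hse, hne⟩
    rcases Finset.mem_insert.mp hs with rfl | hsE
    · exact hne rfl
    · exact (hE s hsE).1 ⟨has, hse.trans hae.2.1,
        fun hsm => hae.2.2 (hae.2.1.antisymm (hsm ▸ hse))⟩
  by_cases hbe : OnPathUp b m e
  · have hbe' : b = e := hb.resolve_right fun ⟨_, hchild⟩ => IsChild.not_sub hchild hbe.1
    obtain ⟨p, hep, hpm⟩ := hbe.2.1.exists_isChild hbe.2.2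
    refine ⟨p, .inr ⟨⟨C, hC, hpm.trans hmC⟩, hep⟩, C, hC, m, hmC, ham, hpm, fun s hs =>
      ⟨fun has => ?_, ?_⟩⟩
    · rcases Finset.mem_insert.mp hs with rfl | hsE
      exacts [hae has, (hE s hsE).1 has]
    · rintro ⟨hps, hsm, hne⟩
      rcases Finset.mem_insert.mp hs with rfl | hsE
      · exact hep.not_sub hps
      · exact (hE s hsE).2 ⟨hbe' ▸ hep.sub.trans hps, hsm, hne⟩
  · refine ⟨b, hb, C, hC, m, hmC, ham, hbm, fun s hs => ?_⟩
    rcases Finset.mem_insert.mp hs with rfl | hsE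
    exacts [⟨hae, hbe⟩, hE s hsE]

end Connectivity

section Shifting

variable [DecidableEq X] {F : Multiset (PT X)} {G : Finset (PT X)}

theorem cutAll_insert_of_cutAll_fst_eq_none {g : PT X} (hg : (cutAll G g).1 = none)
    (t : PT X) : cutAll (insert g G) t = cutAll G t := by
  induction t with
  | leaf x => rfl
  | node l r ihl ihr =>
    have child : ∀ c, cutAll (insert g G) c = cutAll G c →
        attached (insert g G) c = attached G c ∧ detached (insert g G) c = detached G c := by
      intro c hc
      by_cases hcg : c = g
      · subst hcg
        simp [attached, detached, hc, hg]
      · exact attached_congr hc (by simp [hcg])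
    exact cutAll_eq_of_children (.inl rfl) (child l ihl) (child r ihr)

/-- Cutting `g` on top of `G` leaves the root component of `t` empty and detaches instead the
component through `g`, which was that root component. -/
def InsertDetachesRoot (G : Finset (PT X)) (g t : PT X) : Prop :=
  (cutAll G t).1 = (cutAll G g).1 ∧ (cutAll (insert g G) t).1 = none ∧
    (cutAll (insert g G) t).2 = (cutAll G t).2 + ((cutAll G g).1.toList : Multiset (PT X))

theorem InsertDetachesRoot.cutForest_eq {g t : PT X} (h : InsertDetachesRoot G g t) :
    cutForest (insert g G) t = cutForest G t := by
  obtain ⟨h₁, h₂, h₃⟩ := h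
  simp [cutForest, h₁, h₂, h₃, add_comm]

theorem insertDetachesRoot_of_isChild {g t b : PT X} (hgG : g ∉ G)
    (ht : t = .node g b ∨ t = .node b g) (hgb : ¬ Sub g b) (hbG : attached G b = none) :
    InsertDetachesRoot G g t := by
  have hb := attached_insert_of_not_sub hgb (G := G)
  rw [InsertDetachesRoot, cutAll_of_attached_eq_none ht hbG,
    cutAll_of_attached_eq_none ht (hb.1.trans hbG), hb.2]
  simp [attached, detached, hgG, cutAll_insert_self, add_right_comm]

theorem InsertDetachesRoot.of_isChild {g c t b : PT X} (h : InsertDetachesRoot G g c)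
    (hcg : c ≠ g) (hcG : c ∉ G) (ht : t = .node c b ∨ t = .node b c) (hgb : ¬ Sub g b)
    (hbG : attached G b = none) : InsertDetachesRoot G g t := by
  have hb := attached_insert_of_not_sub hgb (G := G)
  obtain ⟨h₁, h₂, h₃⟩ := h
  rw [InsertDetachesRoot, cutAll_of_attached_eq_none ht hbG,
    cutAll_of_attached_eq_none ht (hb.1.trans hbG), hb.2]
  simp [attached, detached, hcg, hcG, h₁, h₂, h₃, add_right_comm]

theorem InsertDetachesRoot.attached_eq {g c : PT X} (h : InsertDetachesRoot G g c)
    (hcG : c ∈ G) :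
    attached (insert g G) c = attached G c ∧ detached (insert g G) c = detached G c := by
  obtain ⟨h₁, h₂, h₃⟩ := h
  simp [attached, detached, hcG, h₁, h₂, h₃]

/-- Going up from the parent `p` of `g`: while the path stays in the (label-free) component of
`p` in `F − (G ∪ {g})`, the component through `g` is carried along unchanged; once an edge of
`G` is crossed, both cuttings agree. -/
theorem cutAll_insert_eq_or_insertDetachesRoot (hF : (labelsF F).Nodup) {C g p : PT X}
    (hC : C ∈ F) (hgp : IsChild g p) (hpC : Sub p C) (hgG : g ∉ G)
    (hno : ∀ x, ¬ ConnAvoiding F (insert g G) (.leaf x) p) (t : PT X) (hgt : Sub g t)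
    (htC : Sub t C) : cutAll (insert g G) t = cutAll G t ∨
      (ConnAvoiding F (insert g G) t p ∧ InsertDetachesRoot G g t) := by
  induction t with
  | leaf y =>
    cases hgt
    exact .inl (cutAll_insert_self G _)
  | node l r ihl ihr =>
    by_cases hg : g = .node l r
    · exact .inl (hg ▸ cutAll_insert_self G g)
    obtain ⟨c, b, ht, hgc, ih⟩ : ∃ c b, (PT.node l r = .node c b ∨ PT.node l r = .node b c) ∧
        Sub g c ∧ (Sub c C → cutAll (insert g G) c = cutAll G c ∨
          (ConnAvoiding F (insert g G) c p ∧ InsertDetachesRoot G g c)) := by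
      rcases sub_node_iff.mp hgt with h | h | h
      exacts [absurd h hg, ⟨l, r, .inl rfl, h, ihl h⟩, ⟨r, l, .inr rfl, h, ihr h⟩]
    have hct : IsChild c (.node l r) := ⟨b, ht⟩
    have hgb : ¬ Sub g b := not_sub_of_sibling ht (htC.nodup (nodup_labels_of_mem hF hC)) hgc
    have hb := attached_insert_of_not_sub hgb (G := G)
    have hbG : ConnAvoiding F (insert g G) (.node l r) p → attached G b = none := fun htp =>
      hb.1 ▸ attached_eq_none_of_noLabel hF hno hC htC ⟨c, ht.symm⟩ htp
    by_cases hcg : c = g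
    · subst hcg
      obtain rfl : PT.node l r = p :=
        hct.eq_parent (nodup_labels_of_mem hF hC) hgp htC hpC
      have htp := connAvoiding_self (G := insert c G) hC htC
      exact .inr ⟨htp, insertDetachesRoot_of_isChild hgG ht hgb (hbG htp)⟩
    rcases ih (hct.sub.trans htC) with heq | ⟨hcp, hc⟩
    · exact .inl (cutAll_eq_of_children ht (attached_congr heq (by simp [hcg])) hb)
    by_cases hcG : c ∈ G
    · exact .inl (cutAll_eq_of_children ht (hc.attached_eq hcG) hb)
    have htp : ConnAvoiding F (insert g G) (.node l r) p :=
      (connAvoiding_of_isChild hF hC htC hct (by simp [hcg, hcG])).symm.trans hF hcp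
    exact .inr ⟨htp, hc.of_isChild hcg hcG ht hgb (hbG htp)⟩

theorem divF_insert_eq_of_noLabel (hF : (labelsF F).Nodup) {g v : PT X}
    (hv : IsEndpoint F g v) (hno : ∀ x, ¬ ConnAvoiding F (insert g G) (.leaf x) v) :
    divF F (insert g G) = divF F G := by
  by_cases hgG : g ∈ G
  · rw [Finset.insert_eq_of_mem hgG]
  refine divF_congr fun D hD => ?_
  by_cases hgD : Sub g D
  swap
  · simp only [cutForest, cutAll_insert_of_not_sub hgD]
  rcases hv with rfl | ⟨⟨C, hC, hvC⟩, hgv⟩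
  · have hk : (cutAll G v).1 = none := by
      by_contra hk
      rw [← cutAll_insert_self G v] at hk
      obtain ⟨x, hx⟩ := exists_leaf_connAvoiding hF hD hgD hk
      exact hno x hx
    simp only [cutForest, cutAll_insert_of_cutAll_fst_eq_none hk]
  · obtain rfl := eq_of_sub_of_sub hF hD hC hgD (IsChild.sub hgv |>.trans hvC)
    rcases cutAll_insert_eq_or_insertDetachesRoot hF hD hgv hvC hgG hno D hgD (.refl D)
      with heq | ⟨_, hroot⟩
    · simp only [cutForest, heq]
    · exact hroot.cutForest_eq

end Shifting

theorem shifting_lemma_general {X : Type} [DecidableEq X] (T : PT X)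
    (F : Multiset (PT X)) (hF : ForestOf F {T})
    (hnd : (labels T).Nodup)
    (E : Finset (PT X)) (e f v_e v_f : PT X)
    (hfE : f ∈ E)
    (hvf : IsEndpoint F f v_f) (hve : IsEndpoint F e v_e)
    (hconn : ConnAvoiding F E v_f v_e)
    (hnolabel : ∀ x : X, ¬ ConnAvoiding F (insert e E) (PT.leaf x) v_f) :
    divF F E = divF F (insert e (E.erase f)) := by
  have hF' : (labelsF F).Nodup := by
    obtain ⟨E₀, rfl⟩ := hF
    rw [labelsF_divF]
    simpa [labelsF] using hnd
  obtain ⟨v, hv, hv_fv⟩ := exists_isEndpoint_connAvoiding_insert hconn hve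
  have hcut_e : divF F (insert e E) = divF F E :=
    divF_insert_eq_of_noLabel hF' hv fun x hx => hnolabel x (hx.trans hF' hv_fv.symm)
  have hcut_f : divF F (insert f (insert e (E.erase f))) = divF F (insert e (E.erase f)) := by
    refine divF_insert_eq_of_noLabel hF' hvf ?_
    rwa [Finset.insert_comm, Finset.insert_erase hfE]
  rw [← hcut_e, ← hcut_f, Finset.insert_comm, Finset.insert_erase hfE]

/-- **Shifting Lemma** (Bordewich et al.).  Let `F` be a forest of an
`X`-tree, `e` and `f` edges of `F` and `E` a set of edges of `F` with
`f ∈ E` and `e ∉ E`.  If the endpoint `v_f` of `f` closest to `e` is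
connected to an endpoint `v_e` of `e` in `F − E`, and no labelled node is
connected to `v_f` in `F − (E ∪ {e})`, then
`F ÷ E = F ÷ ((E ∖ {f}) ∪ {e})`. -/
theorem shifting_lemma {X : Type} [DecidableEq X] (T : PT X)
    (F : Multiset (PT X)) (hF : ForestOf F {T})
    (hnd : (labels T).Nodup)
    (E : Finset (PT X)) (e f v_e v_f : PT X)
    (hfE : f ∈ E) (heE : e ∉ E)
    (hfedge : ∃ C ∈ F, Sub f C ∧ f ≠ C)
    (heedge : ∃ C ∈ F, Sub e C ∧ e ≠ C)
    (hvf : IsEndpoint F f v_f) (hve : IsEndpoint F e v_e)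
    (hconn : ConnAvoiding F E v_f v_e)
    (hnolabel : ∀ x : X, ¬ ConnAvoiding F (insert e E) (PT.leaf x) v_f) :
    divF F E = divF F (insert e (E.erase f)) :=
  shifting_lemma_general T F hF hnd E e f v_e v_f hfE hvf hve hconn hnolabel

end Phylo
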